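/- Let c_1,…,c_n be reals and let d_1,…,d_n be reals with d_1 = d_n = 1 and d_i ≠ 0 for all i. Then G·C·D = C − F·D; equivalently, writing A = F·D, one has G·C·G^{−1} = C − A. -/

import Mathlib

open Finset Matrix
/-- The matrix `D` with entries `d_{ij}`: `0` for `i < j`, `d_i` for `i = j`, and
`-d_j · (∏_{k=j+1}^{i-1} (1 - d_k)) · d_i` for `i > j`. -/
def Dmat (n : ℕ) (d : Fin n → ℝ) : Matrix (Fin n) (Fin n) ℝ :=
  Matrix.of fun i j =>
    if i < j then 0
    else if i = j then d i
    else -(d j) * (∏ k ∈ Finset.Ioo j i, (1 - d k)) * d i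

/-- The lower-triangular matrix `G` with `G_{ii} = 1/d_i`, `G_{ij} = 1` for `i > j`. -/
noncomputable def Gmat (n : ℕ) (d : Fin n → ℝ) : Matrix (Fin n) (Fin n) ℝ :=
  Matrix.of fun i j => if i = j then 1 / d i else if j < i then 1 else 0

/-- The matrix `F` with `F_{ij} = c_i - c_j` for `i > j` and `0` otherwise. -/
def Fmat (n : ℕ) (c : Fin n → ℝ) : Matrix (Fin n) (Fin n) ℝ :=
  Matrix.of fun i j => if j < i then c i - c j else 0

/-!
Two identities give the theorem. First, `G` is the inverse of `D`: the partial column sums of `D`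
telescope, `∑_{j ≤ k < i} d_{kj} = d_j ∏_{j<k<i} (1 - d_k)`, which is exactly `-d_{ij} / d_i`.
Second, `G C + F = C G` entrywise, since `c_j + (c_i - c_j) = c_i` below the diagonal.
Hence `G C D = (C G - F) D = C - F D`.
-/

theorem prod_Ioo_one_sub_add_sum_prod_Ioo_mul {R : Type*} [CommRing R] (e : ℕ → R) (j i : ℕ) :
    ∏ k ∈ Ioo j i, (1 - e k) + ∑ k ∈ Ioo j i, (∏ m ∈ Ioo j k, (1 - e m)) * e k = 1 := by
  induction i with
  | zero => simp
  | succ i ih =>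
    rcases le_or_gt i j with h | h
    · have hempty : Ioo j (i + 1) = ∅ := by ext; simp; omega
      simp [hempty]
    · have hinsert : Ioo j (i + 1) = insert i (Ioo j i) := by ext; simp; omega
      rw [hinsert, prod_insert (by simp), sum_insert (by simp)]
      linear_combination ih

theorem Fin.prod_Ioo_one_sub_add_sum_prod_Ioo_mul {R : Type*} [CommRing R] {n : ℕ}
    (e : Fin n → R) (j i : Fin n) :
    ∏ k ∈ Ioo j i, (1 - e k) + ∑ k ∈ Ioo j i, (∏ m ∈ Ioo j k, (1 - e m)) * e k = 1 := by
  let e' : ℕ → R := fun m => if h : m < n then e ⟨m, h⟩ else 0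
  have he' (k : Fin n) : e' k = e k := dif_pos k.isLt
  have hprod (a b : Fin n) : ∏ k ∈ Ioo a b, (1 - e k) = ∏ k ∈ Ioo (a : ℕ) b, (1 - e' k) := by
    rw [← Fin.map_valEmbedding_Ioo, prod_map]
    simp only [Fin.valEmbedding_apply, he']
  convert _root_.prod_Ioo_one_sub_add_sum_prod_Ioo_mul e' j i using 2
  · exact hprod j i
  · rw [← Fin.map_valEmbedding_Ioo, sum_map]
    simp only [Fin.valEmbedding_apply, he', hprod]

section

variable {n : ℕ} {d : Fin n → ℝ} {i j : Fin n}

theorem Dmat_apply_of_lt (h : i < j) : Dmat n d i j = 0 := by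
  simp [Dmat, h]

theorem Dmat_apply_self : Dmat n d i i = d i := by
  simp [Dmat]

theorem Dmat_apply_of_gt (h : j < i) :
    Dmat n d i j = -d j * (∏ k ∈ Ioo j i, (1 - d k)) * d i := by
  simp [Dmat, h.not_gt, h.ne']

theorem sum_Iio_Dmat_apply_of_lt (h : j < i) :
    ∑ k ∈ Iio i, Dmat n d k j = d j * ∏ k ∈ Ioo j i, (1 - d k) := by
  have hIco : ∑ k ∈ Iio i, Dmat n d k j = ∑ k ∈ Ico j i, Dmat n d k j := by
    refine (sum_subset (fun k hk => mem_Iio.2 (mem_Ico.1 hk).2) fun k hk hk' => ?_).symm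
    exact Dmat_apply_of_lt (by simp_all)
  rw [hIco, ← Ioo_insert_left h, sum_insert (by simp), Dmat_apply_self,
    sum_congr rfl fun k hk => Dmat_apply_of_gt (mem_Ioo.1 hk).1]
  simp_rw [mul_assoc, ← mul_sum]
  linear_combination -d j * Fin.prod_Ioo_one_sub_add_sum_prod_Ioo_mul d j i

theorem Gmat_mul_apply (M : Matrix (Fin n) (Fin n) ℝ) :
    (Gmat n d * M) i j = ∑ k ∈ Iio i, M k j + M i j / d i := by
  have hrow (k : Fin n) : Gmat n d i k * M k j =
      (if k ∈ Iio i then M k j else 0) + if k = i then M i j / d i else 0 := by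
    rcases lt_trichotomy k i with h | rfl | h
    · simp [Gmat, h, h.ne, h.ne']
    · simp [Gmat, div_eq_inv_mul]
    · simp [Gmat, h.ne, h.ne', h.not_gt]
  simp only [mul_apply, hrow, sum_add_distrib, sum_ite_mem, univ_inter, sum_ite_eq', mem_univ,
    if_true]

theorem Gmat_mul_Dmat (hd : ∀ i, d i ≠ 0) : Gmat n d * Dmat n d = 1 := by
  ext i j
  rw [Gmat_mul_apply, one_apply]
  rcases lt_trichotomy i j with h | rfl | h
  · rw [sum_eq_zero fun k hk => Dmat_apply_of_lt ((mem_Iio.1 hk).trans h), Dmat_apply_of_lt h]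
    simp [h.ne]
  · rw [sum_eq_zero fun k hk => Dmat_apply_of_lt (mem_Iio.1 hk), Dmat_apply_self]
    simp [hd]
  · rw [sum_Iio_Dmat_apply_of_lt h, Dmat_apply_of_gt h, if_neg h.ne']
    field_simp [hd i]
    ring

end

theorem Gmat_mul_diagonal_add_Fmat (n : ℕ) (c d : Fin n → ℝ) :
    Gmat n d * diagonal c + Fmat n c = diagonal c * Gmat n d := by
  ext i j
  simp only [Matrix.add_apply, mul_diagonal, diagonal_mul, Gmat, Fmat, of_apply]
  rcases lt_trichotomy j i with h | rfl | h
  · simp [h, h.ne']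
  · simp [mul_comm]
  · simp [h.ne, h.not_gt]

theorem stmt_7 (n : ℕ) (c d : Fin n → ℝ)
    (hd : ∀ i : Fin n, d i ≠ 0) :
    Gmat n d * Matrix.diagonal c * Dmat n d =
      Matrix.diagonal c - Fmat n c * Dmat n d := by
  rw [← add_sub_cancel_right (Gmat n d * diagonal c) (Fmat n c), Gmat_mul_diagonal_add_Fmat,
    sub_mul, Matrix.mul_assoc, Gmat_mul_Dmat hd, Matrix.mul_one]
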